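/- arXiv:hep-th/9405019 — 6 statements merged into one kernel-verified Lean document; each statement's English description precedes it below -/
import Mathlib

section
/- Let A be a symmetric p×p real matrix, G a symmetric q×q real matrix, and C a p×q real matrix with A*C = C*G, C*Cᵀ = 1 + R_A and Cᵀ*C = 1 + R_D for matrices R_A, R_D. If v is a nonzero vector with A*v = λ*v and R_A*v = v (an even eigenvector), then Cᵀ*v ≠ 0, G*(Cᵀ*v) = λ*(Cᵀ*v), and R_D*(Cᵀ*v) = Cᵀ*v; in particular λ is an eigenvalue of G with an even eigenvector. -/
/-!
On an `R_A`-even vector `v`, `C * Cᵀ = 1 + R_A` acts as multiplication by `2`. Hence `Cᵀ *ᵥ v`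
cannot vanish, and `(Cᵀ * C) *ᵥ (Cᵀ *ᵥ v) = Cᵀ *ᵥ (2 • v)` shows that `R_D` fixes `Cᵀ *ᵥ v`.
Transposing `A * C = C * G` with `A`, `G` symmetric gives `G * Cᵀ = Cᵀ * A`, so `Cᵀ` carries
`λ`-eigenvectors of `A` to `λ`-eigenvectors of `G`.
-/

open Matrix

namespace Matrix

variable {m n α : Type*} [Fintype m] [Fintype n]

theorem mul_transpose_eq_transpose_mul_of_mul_eq [CommSemiring α] {A : Matrix m m α}
    {G : Matrix n n α} {C : Matrix m n α} (hA : Aᵀ = A) (hG : Gᵀ = G) (h : A * C = C * G) :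
    G * Cᵀ = Cᵀ * A := by
  simpa only [transpose_mul, hA, hG] using (congrArg transpose h).symm

theorem mulVec_mulVec_eq_smul_of_mul_eq [CommSemiring α] {A : Matrix m m α}
    {G : Matrix n n α} {N : Matrix n m α} (h : G * N = N * A) {c : α} {v : m → α}
    (hv : A *ᵥ v = c • v) : G *ᵥ N *ᵥ v = c • N *ᵥ v := by
  rw [mulVec_mulVec, h, ← mulVec_mulVec, hv, mulVec_smul]

variable [DecidableEq m]

theorem mulVec_mulVec_eq_add_self_of_mul_eq_one_add [Semiring α] {M : Matrix m n α}
    {N : Matrix n m α} {R : Matrix m m α} (hMN : M * N = 1 + R) {v : m → α}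
    (hv : R *ᵥ v = v) : M *ᵥ N *ᵥ v = v + v := by
  rw [mulVec_mulVec, hMN, add_mulVec, one_mulVec, hv]

theorem mulVec_ne_zero_of_mul_eq_one_add [Ring α] [IsAddTorsionFree α] {M : Matrix m n α}
    {N : Matrix n m α} {R : Matrix m m α} (hMN : M * N = 1 + R) {v : m → α}
    (hv : R *ᵥ v = v) (hv0 : v ≠ 0) : N *ᵥ v ≠ 0 := by
  intro hNv
  have hvv : v + v = 0 := by
    rw [← mulVec_mulVec_eq_add_self_of_mul_eq_one_add hMN hv, hNv, mulVec_zero]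
  exact hv0 (two_nsmul_eq_zero.mp ((two_nsmul v).trans hvv))

theorem mulVec_fixed_of_mul_eq_one_add [Ring α] [DecidableEq n] {M : Matrix m n α}
    {N : Matrix n m α} {R : Matrix m m α} {S : Matrix n n α} (hMN : M * N = 1 + R)
    (hNM : N * M = 1 + S) {v : m → α} (hv : R *ᵥ v = v) : S *ᵥ N *ᵥ v = N *ᵥ v := by
  have hNMN : (1 + S) *ᵥ N *ᵥ v = N *ᵥ v + N *ᵥ v := by
    rw [← hNM, ← mulVec_mulVec,
      mulVec_mulVec_eq_add_self_of_mul_eq_one_add hMN hv, mulVec_add]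
  rw [add_mulVec, one_mulVec] at hNMN
  exact add_left_cancel hNMN

end Matrix

/-- Suppose `C` intertwines the symmetric real matrices `A` and `G`, with
`C*Cᵀ = 1 + R_A` and `Cᵀ*C = 1 + R_D`.  If `v` is a nonzero eigenvector of `A`
with eigenvalue `λ` that is even under `R_A`, then `Cᵀ*v` is nonzero, is an
eigenvector of `G` with the same eigenvalue `λ`, and is even under `R_D`. -/
theorem even_eigenvector_transfers {p q : ℕ}
    (A : Matrix (Fin p) (Fin p) ℝ) (G : Matrix (Fin q) (Fin q) ℝ)
    (C : Matrix (Fin p) (Fin q) ℝ)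
    (RA : Matrix (Fin p) (Fin p) ℝ) (RD : Matrix (Fin q) (Fin q) ℝ)
    (hA : Aᵀ = A) (hG : Gᵀ = G)
    (h : A * C = C * G)
    (h1 : C * Cᵀ = 1 + RA) (h2 : Cᵀ * C = 1 + RD)
    (lam : ℝ) (v : Fin p → ℝ) (hv : v ≠ 0)
    (heig : A.mulVec v = lam • v) (heven : RA.mulVec v = v) :
    Cᵀ.mulVec v ≠ 0 ∧
      G.mulVec (Cᵀ.mulVec v) = lam • (Cᵀ.mulVec v) ∧
      RD.mulVec (Cᵀ.mulVec v) = Cᵀ.mulVec v :=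
  ⟨mulVec_ne_zero_of_mul_eq_one_add h1 heven hv,
    mulVec_mulVec_eq_smul_of_mul_eq (mul_transpose_eq_transpose_mul_of_mul_eq hA hG h) heig,
    mulVec_fixed_of_mul_eq_one_add h1 h2 heven⟩
end

section
/- Let A be a symmetric p×p real matrix, G a symmetric q×q real matrix, and C a p×q real matrix with A*C = C*G, C*Cᵀ = 1 + R_A and Cᵀ*C = 1 + R_D for matrices R_A, R_D. Then a scalar λ is an eigenvalue of A possessing a nonzero eigenvector fixed by R_A if and only if λ is an eigenvalue of G possessing a nonzero eigenvector fixed by R_D; that is, exactly the eigenvalues with even eigenvectors are common to A and G. -/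
open Matrix

/-!
If `R *ᵥ v = v` and `C Cᵀ = 1 + R`, then `C (Cᵀ v) = 2 v`, so `Cᵀ v` is nonzero whenever `v` is;
it is an eigenvector of `G` whenever `v` is one of `A`, because symmetry turns `A C = C G` into
`Cᵀ A = G Cᵀ`; and it is even, since `(1 + R_D) (Cᵀ v) = Cᵀ (C Cᵀ v) = 2 Cᵀ v`. The converse is
the same argument with `C` in place of `Cᵀ`.
-/

variable {K m n : Type*} [Field K] [Fintype m] [Fintype n] [DecidableEq n]

def HasEvenEigenvector (A R : Matrix n n K) (μ : K) : Prop :=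
  ∃ v : n → K, v ≠ 0 ∧ A *ᵥ v = μ • v ∧ R *ᵥ v = v

theorem mulVec_transpose_mulVec_eq_two_smul {B : Matrix m n K} {R : Matrix n n K} {v : n → K}
    (hB : Bᵀ * B = 1 + R) (hv : R *ᵥ v = v) : Bᵀ *ᵥ (B *ᵥ v) = (2 : K) • v := by
  rw [mulVec_mulVec, hB, add_mulVec, one_mulVec, hv, two_smul]

theorem HasEvenEigenvector.of_intertwine [DecidableEq m] [NeZero (2 : K)] {A : Matrix n n K} {G : Matrix m m K}
    {B : Matrix m n K} {RA : Matrix n n K} {RG : Matrix m m K} {μ : K}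
    (hBA : B * A = G * B) (hA : Bᵀ * B = 1 + RA) (hG : B * Bᵀ = 1 + RG)
    (hv : HasEvenEigenvector A RA μ) : HasEvenEigenvector G RG μ := by
  obtain ⟨v, hv0, hAv, hRv⟩ := hv
  have hBBv := mulVec_transpose_mulVec_eq_two_smul hA hRv
  refine ⟨B *ᵥ v, fun hBv ↦ hv0 ?_, ?_, ?_⟩
  · rw [hBv, mulVec_zero, eq_comm, smul_eq_zero] at hBBv
    exact hBBv.resolve_left two_ne_zero
  · rw [mulVec_mulVec, ← hBA, ← mulVec_mulVec, hAv, mulVec_smul]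
  · have h2Bv : (B * Bᵀ) *ᵥ (B *ᵥ v) = (2 : K) • B *ᵥ v := by
      rw [← mulVec_mulVec, hBBv, mulVec_smul]
    rw [hG, add_mulVec, one_mulVec, two_smul] at h2Bv
    exact add_left_cancel h2Bv

/-- Suppose `C` intertwines the symmetric real matrices `A` and `G`, with
`C*Cᵀ = 1 + R_A` and `Cᵀ*C = 1 + R_D`.  Then `λ` is an eigenvalue of `A` with a
nonzero eigenvector even under `R_A` if and only if `λ` is an eigenvalue of `G`
with a nonzero eigenvector even under `R_D`: exactly the eigenvalues with even
eigenvectors are common to `A` and `G`. -/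
theorem even_eigenvalues_common {p q : ℕ}
    (A : Matrix (Fin p) (Fin p) ℝ) (G : Matrix (Fin q) (Fin q) ℝ)
    (C : Matrix (Fin p) (Fin q) ℝ)
    (RA : Matrix (Fin p) (Fin p) ℝ) (RD : Matrix (Fin q) (Fin q) ℝ)
    (hA : Aᵀ = A) (hG : Gᵀ = G)
    (h : A * C = C * G)
    (h1 : C * Cᵀ = 1 + RA) (h2 : Cᵀ * C = 1 + RD)
    (lam : ℝ) :
    (∃ v : Fin p → ℝ, v ≠ 0 ∧ A.mulVec v = lam • v ∧ RA.mulVec v = v) ↔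
      (∃ w : Fin q → ℝ, w ≠ 0 ∧ G.mulVec w = lam • w ∧ RD.mulVec w = w) := by
  have hCt : Cᵀ * A = G * Cᵀ := by
    simpa only [transpose_mul, hA, hG] using congrArg transpose h
  have h1' : Cᵀᵀ * Cᵀ = 1 + RA := by rwa [transpose_transpose]
  exact ⟨HasEvenEigenvector.of_intertwine hCt h1' h2,
    HasEvenEigenvector.of_intertwine h.symm h2 h1⟩
end

section
/- Let L ≥ 5 be odd and m = (L+3)/2. Let A be the adjacency matrix of the graph A_L, D the adjacency matrix of the graph D_m, and C the explicit L×m intertwiner cell matrix. Then C intertwines the two adjacency matrices: A*C = C*D. -/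
open Matrix

/-- Adjacency matrix of the graph `A_L`, with vertices `1,…,L` encoded as `Fin L`
(vertex `a` is `a+1` in 1-based labelling): `A_{a,a'} = 1` iff `|a − a'| = 1`. -/
def adjA (L : ℕ) : Matrix (Fin L) (Fin L) ℤ := fun a a' =>
  if (a : ℕ) + 1 = (a' : ℕ) ∨ (a' : ℕ) + 1 = (a : ℕ) then 1 else 0

/-- Adjacency matrix of the graph `D_m`, with vertices `1,…,m` encoded as `Fin m`.
In 1-based labels the edges are `{b,b+1}` for `1 ≤ b ≤ m−3`, `{m−2,m−1}` and
`{m−2,m}`; i.e. all consecutive pairs except `{m−1,m}`, plus the pair `{m−2,m}`.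
In the 0-based encoding, `b` and `b'` are adjacent iff they are consecutive with
`b + b' + 3 ≠ 2m` (excluding the 1-based pair `{m−1,m}`), or differ by 2 with
`b + b' + 4 = 2m` (the 1-based pair `{m−2,m}`). -/
def adjD (m : ℕ) : Matrix (Fin m) (Fin m) ℤ := fun b b' =>
  if ((b : ℕ) + 1 = (b' : ℕ) ∨ (b' : ℕ) + 1 = (b : ℕ)) ∧ (b : ℕ) + (b' : ℕ) + 3 ≠ 2 * m then 1
  else if ((b : ℕ) + 2 = (b' : ℕ) ∨ (b' : ℕ) + 2 = (b : ℕ)) ∧ (b : ℕ) + (b' : ℕ) + 4 = 2 * m then 1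
  else 0

/-- The explicit `L×m` intertwiner cell matrix between `A_L` and `D_m`
(for odd `L` and `m = (L+3)/2`).  In 1-based labels:
`C_{a,b} = δ_{a,b} + δ_{a,L+1−b}` for `1 ≤ b ≤ m−2`, and
`C_{a,m−1} = C_{a,m} = δ_{a,(L+1)/2}`.  In the 0-based encoding, for
`b + 3 ≤ m` the entry is `δ_{a,b} + δ_{a+b+1,L}`, and otherwise it is
`δ_{a+1,(L+1)/2}`. -/
def interC (L m : ℕ) : Matrix (Fin L) (Fin m) ℤ := fun a b =>
  if (b : ℕ) + 3 ≤ m then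
    (if (a : ℕ) = (b : ℕ) then 1 else 0) + (if (a : ℕ) + (b : ℕ) + 1 = L then 1 else 0)
  else
    if (a : ℕ) + 1 = (L + 1) / 2 then 1 else 0

/-- Permutation matrix of the height reversal `a ↦ L+1−a` of `A_L`:
`(R_A)_{a,a'} = δ_{a',L+1−a}`, i.e. in the 0-based encoding `a + a' + 1 = L`. -/
def heightRevA (L : ℕ) : Matrix (Fin L) (Fin L) ℤ := fun a a' =>
  if (a : ℕ) + (a' : ℕ) + 1 = L then 1 else 0

/-- Permutation matrix of the height reversal of `D_m`, fixing `1,…,m−2` and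
interchanging `m−1` with `m`.  In the 0-based encoding, `b` with `b + 3 ≤ m` is
fixed, and otherwise `b` is sent to the `b'` with `b + b' + 3 = 2m`. -/
def heightRevD (m : ℕ) : Matrix (Fin m) (Fin m) ℤ := fun b b' =>
  if (b : ℕ) + 3 ≤ m then (if b = b' then 1 else 0)
  else (if (b : ℕ) + (b' : ℕ) + 3 = 2 * m then 1 else 0)

/-! Test the identity on the basis vectors `e_k` (0-based, so `k = m - 3` is the branch vertex of
`D_m` and `k = m - 2, m - 1` are its two leaves; `L = 2m - 3`). The column `C e_k` is
`e_k + e_{L-1-k}` for `k ≤ m - 3` and the middle basis vector `e_{m-2}` of `A_L` at a leaf, while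
`A e_j = e_{j-1} + e_{j+1}` and `D e_k` sums the neighbours of `k`. For `k ≤ m - 4` the terms of
`A C e_k` and `C D e_k` are matched by the reflection `j ↦ L - 1 - j`; at the branch vertex both
leaves contribute `e_{m-2}`, accounting for the doubled middle term of `A (e_{m-3} + e_{m-1})`; at a
leaf both sides equal `e_{m-3} + e_{m-1}`. -/

/-- The `k`-th standard basis vector of `Fin n → R`; it is `0` when `k ∉ [0, n)`, which lets the
boundary rows and columns of the path-like graphs be treated like the others. -/
def unitVec {R : Type*} [Zero R] [One R] (n : ℕ) (k : ℤ) : Fin n → R :=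
  fun i => if (i : ℤ) = k then 1 else 0

section unitVec

variable {R : Type*} [NonAssocSemiring R]

theorem unitVec_natCast {n : ℕ} (j : Fin n) : (unitVec n j : Fin n → R) = Pi.single j 1 := by
  ext i
  simp [unitVec, Pi.single_apply, Fin.ext_iff]

theorem mulVec_unitVec {n p : ℕ} (M : Matrix (Fin n) (Fin p) R) (k : ℤ) (i : Fin n) :
    (M *ᵥ unitVec p k) i = if h : 0 ≤ k ∧ k < p then M i ⟨k.toNat, by omega⟩ else 0 := by
  split_ifs with h
  · set j : Fin p := ⟨k.toNat, by omega⟩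
    have hk : k = (j : ℕ) := by simp [j]; omega
    rw [hk, unitVec_natCast, mulVec_single_one]
    rfl
  · have : (unitVec p k : Fin p → R) = 0 := funext fun j => if_neg (by omega)
    simp [this]

end unitVec

section Intertwining

variable {L m : ℕ} {k : ℤ}

theorem adjA_mulVec_unitVec (hk₀ : 0 ≤ k) (hk : k < L) :
    adjA L *ᵥ unitVec L k = unitVec L (k - 1) + unitVec L (k + 1) := by
  ext a
  simp only [mulVec_unitVec, dif_pos (And.intro hk₀ hk), adjA, unitVec, Pi.add_apply]
  split_ifs <;> omega

theorem adjD_mulVec_unitVec_of_add_four_le (hk₀ : 0 ≤ k) (hk : k + 4 ≤ m) :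
    adjD m *ᵥ unitVec m k = unitVec m (k - 1) + unitVec m (k + 1) := by
  ext b
  simp only [mulVec_unitVec, dif_pos (And.intro hk₀ (by omega : k < m)), adjD, unitVec,
    Pi.add_apply]
  split_ifs <;> omega

theorem adjD_mulVec_unitVec_of_add_three_eq (hk₀ : 0 ≤ k) (hk : k + 3 = m) :
    adjD m *ᵥ unitVec m k = unitVec m (k - 1) + unitVec m (k + 1) + unitVec m (k + 2) := by
  ext b
  simp only [mulVec_unitVec, dif_pos (And.intro hk₀ (by omega : k < m)), adjD, unitVec,
    Pi.add_apply]
  split_ifs <;> omega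

theorem adjD_mulVec_unitVec_of_le_add_two (hk₀ : 0 ≤ k) (hk : m ≤ k + 2) (hkm : k < m) :
    adjD m *ᵥ unitVec m k = unitVec m (m - 3) := by
  ext b
  simp only [mulVec_unitVec, dif_pos (And.intro hk₀ hkm), adjD, unitVec]
  split_ifs <;> omega

theorem interC_mulVec_unitVec_of_add_three_le (hk : k + 3 ≤ m) :
    interC L m *ᵥ unitVec m k = unitVec L k + unitVec L (L - 1 - k) := by
  ext a
  simp only [mulVec_unitVec, interC, unitVec, Pi.add_apply]
  split_ifs <;> omega

theorem interC_mulVec_unitVec_of_le_add_two (hLm : L + 3 = 2 * m)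
    (hk₀ : 0 ≤ k) (hk : m ≤ k + 2) (hkm : k < m) :
    interC L m *ᵥ unitVec m k = unitVec L (m - 2) := by
  ext a
  simp only [mulVec_unitVec, dif_pos (And.intro hk₀ hkm), interC, unitVec]
  split_ifs <;> omega

theorem intertwines_unitVec_of_add_four_le (hLm : L + 3 = 2 * m) (hk₀ : 0 ≤ k)
    (hk : k + 4 ≤ m) :
    adjA L *ᵥ (interC L m *ᵥ unitVec m k) = interC L m *ᵥ (adjD m *ᵥ unitVec m k) := by
  rw [interC_mulVec_unitVec_of_add_three_le (by omega),
    adjD_mulVec_unitVec_of_add_four_le hk₀ hk, mulVec_add, mulVec_add,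
    adjA_mulVec_unitVec (k := k) hk₀ (by omega),
    adjA_mulVec_unitVec (k := L - 1 - k) (by omega) (by omega),
    interC_mulVec_unitVec_of_add_three_le (k := k - 1) (by omega),
    interC_mulVec_unitVec_of_add_three_le (k := k + 1) (by omega)]
  ring_nf

theorem intertwines_unitVec_of_add_three_eq (hLm : L + 3 = 2 * m) (hk₀ : 0 ≤ k)
    (hk : k + 3 = m) :
    adjA L *ᵥ (interC L m *ᵥ unitVec m k) = interC L m *ᵥ (adjD m *ᵥ unitVec m k) := by
  rw [interC_mulVec_unitVec_of_add_three_le hk.le,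
    adjD_mulVec_unitVec_of_add_three_eq hk₀ hk, mulVec_add, mulVec_add, mulVec_add,
    adjA_mulVec_unitVec (k := k) hk₀ (by omega),
    adjA_mulVec_unitVec (k := L - 1 - k) (by omega) (by omega),
    interC_mulVec_unitVec_of_add_three_le (k := k - 1) (by omega),
    interC_mulVec_unitVec_of_le_add_two hLm (k := k + 1) (by omega) (by omega) (by omega),
    interC_mulVec_unitVec_of_le_add_two hLm (k := k + 2) (by omega) (by omega) (by omega),
    show (L : ℤ) - 1 - k = m - 1 by omega, show (L : ℤ) - 1 - (k - 1) = m by omega,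
    show k + 1 = m - 2 by omega]
  ring_nf

theorem intertwines_unitVec_of_le_add_two (hLm : L + 3 = 2 * m) (hk₀ : 0 ≤ k) (hk : m ≤ k + 2)
    (hkm : k < m) :
    adjA L *ᵥ (interC L m *ᵥ unitVec m k) = interC L m *ᵥ (adjD m *ᵥ unitVec m k) := by
  rw [interC_mulVec_unitVec_of_le_add_two hLm hk₀ hk hkm,
    adjD_mulVec_unitVec_of_le_add_two hk₀ hk hkm,
    adjA_mulVec_unitVec (k := m - 2) (by omega) (by omega),
    interC_mulVec_unitVec_of_add_three_le (k := m - 3) (by omega),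
    show (L : ℤ) - 1 - (m - 3) = m - 2 + 1 by omega]
  ring_nf

end Intertwining

theorem adjacency_intertwining_general (L : ℕ) (hodd : Odd L)
    (m : ℕ) (hm : m = (L + 3) / 2) :
    adjA L * interC L m = interC L m * adjD m := by
  have hLm : L + 3 = 2 * m := by obtain ⟨t, rfl⟩ := hodd; omega
  refine ext_of_mulVec_single fun b => ?_
  rw [← mulVec_mulVec, ← mulVec_mulVec, ← unitVec_natCast]
  have hb := b.isLt
  obtain hk | hk | hk : (b : ℤ) + 4 ≤ m ∨ (b : ℤ) + 3 = m ∨ m ≤ (b : ℤ) + 2 := by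
    omega
  · exact intertwines_unitVec_of_add_four_le hLm (by omega) hk
  · exact intertwines_unitVec_of_add_three_eq hLm (by omega) hk
  · exact intertwines_unitVec_of_le_add_two hLm (by omega) hk (by omega)

/-- For odd `L ≥ 5` and `m = (L+3)/2`, the explicit cell matrix `C` intertwines
the adjacency matrices of `A_L` and `D_m`: `A*C = C*D`. -/
theorem adjacency_intertwining (L : ℕ) (hL : 5 ≤ L) (hodd : Odd L)
    (m : ℕ) (hm : m = (L + 3) / 2) :
    adjA L * interC L m = interC L m * adjD m :=
  adjacency_intertwining_general L hodd m hm
end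

section
/- Let L ≥ 5 be odd and m = (L+3)/2, and let C be the explicit L×m intertwiner cell matrix between the graphs A_L and D_m. Then the symmetry operator on the A side satisfies C*Cᵀ = 1 + R_A, where 1 is the L×L identity matrix and R_A is the permutation matrix of the height reversal a ↦ L+1−a of A_L. -/
/-! Write `L = 2k + 1`, so that `m = k + 2`. Column `b < k` of `C` is the indicator of the fibre
`{b, 2k - b}` of the fold `a ↦ min a (2k - a)`, and the last two columns both equal the indicator
of the midpoint `k`. Hence `(C Cᵀ)_{a a'}` is `1` when `a` and `a'` lie in a common fibre other
than `{k}`, `2` when `a = a' = k`, and `0` otherwise. Since the fibres of the fold are the orbits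
of the height reversal, this is `δ_{a,a'} + δ_{a + a', 2k}`. -/

open Matrix

def foldIndex (k a : ℕ) : ℕ := min a (2 * k - a)

lemma foldIndex_eq_foldIndex_iff {k a a' : ℕ} (ha : a ≤ 2 * k) (ha' : a' ≤ 2 * k) :
    foldIndex k a = foldIndex k a' ↔ a = a' ∨ a + a' = 2 * k := by
  unfold foldIndex; omega

lemma foldIndex_lt_iff {k a : ℕ} (ha : a ≤ 2 * k) : foldIndex k a < k ↔ a ≠ k := by
  unfold foldIndex; omega

lemma interC_apply (k : ℕ) (a : Fin (2 * k + 1)) (b : Fin (k + 2)) :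
    interC (2 * k + 1) (k + 2) a b =
      if (b : ℕ) < k then (if foldIndex k a = b then 1 else 0)
      else if (a : ℕ) = k then 1 else 0 := by
  have ha := a.is_lt
  unfold interC foldIndex
  split_ifs <;> omega

lemma sum_fin_ite_eq_mul_ite_eq {R : Type*} [Semiring R] (n x y : ℕ) :
    ∑ b : Fin n, (if x = b then (1 : R) else 0) * (if y = b then 1 else 0) =
      if x = y ∧ x < n then 1 else 0 := by
  rw [Fin.sum_univ_eq_sum_range
    (fun b => (if x = b then (1 : R) else 0) * (if y = b then 1 else 0))]
  simp only [boole_mul, Finset.sum_ite_eq, Finset.mem_range]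
  split_ifs <;> first | rfl | omega

lemma interC_mul_transpose_apply (k : ℕ) (a a' : Fin (2 * k + 1)) :
    (interC (2 * k + 1) (k + 2) * (interC (2 * k + 1) (k + 2))ᵀ) a a' =
      (if foldIndex k a = foldIndex k a' ∧ foldIndex k a < k then 1 else 0) +
        2 * (if (a : ℕ) = k ∧ (a' : ℕ) = k then 1 else 0) := by
  simp only [mul_apply, transpose_apply, interC_apply, Fin.sum_univ_castSucc, Fin.val_castSucc,
    Fin.val_last, Fin.is_lt, if_true, sum_fin_ite_eq_mul_ite_eq]
  split_ifs <;> omega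

theorem cell_symmetry_operator_A_general (L : ℕ) (hodd : Odd L)
    (m : ℕ) (hm : m = (L + 3) / 2) :
    interC L m * (interC L m)ᵀ = 1 + heightRevA L := by
  obtain ⟨k, rfl⟩ := hodd
  obtain rfl : m = k + 2 := by omega
  ext a a'
  have ha : (a : ℕ) ≤ 2 * k := Nat.le_of_lt_succ a.is_lt
  have ha' : (a' : ℕ) ≤ 2 * k := Nat.le_of_lt_succ a'.is_lt
  simp only [interC_mul_transpose_apply, Matrix.add_apply, one_apply, heightRevA, Fin.ext_iff,
    foldIndex_eq_foldIndex_iff ha ha', foldIndex_lt_iff ha]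
  split_ifs <;> omega

/-- For odd `L ≥ 5` and `m = (L+3)/2`, the symmetry operator on the `A` side is
`C*Cᵀ = 1 + R_A`, where `R_A` is the height-reversal permutation matrix of `A_L`. -/
theorem cell_symmetry_operator_A (L : ℕ) (hL : 5 ≤ L) (hodd : Odd L)
    (m : ℕ) (hm : m = (L + 3) / 2) :
    interC L m * (interC L m)ᵀ = 1 + heightRevA L :=
  cell_symmetry_operator_A_general L hodd m hm
end

section
/- Let L ≥ 5 be odd and m = (L+3)/2, and let C be the explicit L×m intertwiner cell matrix between the graphs A_L and D_m. Then the symmetry operator on the D side satisfies Cᵀ*C = 1 + R_D, where 1 is the m×m identity matrix and R_D is the permutation matrix of the height reversal of D_m which fixes 1,…,m−2 and interchanges m−1 and m. -/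
/-! Write `L = 2k+1`, `m = k+2`. Column `b` of `C` is the indicator vector of the orbit
`{c, L-1-c}` of `c = min b k` under the reflection `Fin.rev` of `Fin L`, so `(CᵀC)_{b,b'}` is the
size of the intersection of two such orbits. Orbits of distinct representatives `c ≤ rev c` are
disjoint, and every orbit has two points except that of the fixed centre `k`, which is shared by
the last two columns: this is the swap `R_D`. -/

open Matrix

open Finset

namespace Matrix

def incidence {α β : Type*} (R : Type*) [DecidableEq α] [Zero R] [One R]
    (S : β → Finset α) : Matrix α β R :=
  of fun a b => if a ∈ S b then 1 else 0

theorem incidence_transpose_mul_self_apply {α β R : Type*} [Fintype α] [DecidableEq α]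
    [NonAssocSemiring R] (S : β → Finset α) (b b' : β) :
    ((incidence R S)ᵀ * incidence R S) b b' = #(S b ∩ S b') := by
  simp only [incidence, mul_apply, transpose_apply, of_apply, ite_zero_mul_ite_zero, mul_one]
  rw [sum_boole, filter_and, filter_mem_eq_inter, filter_mem_eq_inter, univ_inter, univ_inter]

end Matrix

namespace Fin

theorem disjoint_pair_rev {n : ℕ} {c c' : Fin n} (hc : c ≤ c.rev) (hc' : c' ≤ c'.rev)
    (hne : c ≠ c') : Disjoint ({c, c.rev} : Finset (Fin n)) {c', c'.rev} := by
  simp only [disjoint_insert_left, disjoint_insert_right, mem_insert, mem_singleton,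
    disjoint_singleton, ne_eq, Fin.rev_inj]
  simp only [Fin.ext_iff, Fin.le_def, Fin.val_rev] at *
  omega

end Fin

def cellColumnRep (k : ℕ) (b : Fin (k + 2)) : Fin (2 * k + 1) :=
  ⟨min b k, by omega⟩

theorem cellColumnRep_le_rev (k : ℕ) (b : Fin (k + 2)) :
    cellColumnRep k b ≤ (cellColumnRep k b).rev := by
  simp only [cellColumnRep, Fin.le_def, Fin.val_rev]
  omega

theorem card_pair_cellColumnRep_rev (k : ℕ) (b : Fin (k + 2)) :
    #{cellColumnRep k b, (cellColumnRep k b).rev} = if (b : ℕ) < k then 2 else 1 := by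
  split_ifs with hb
  · refine card_pair fun h => ?_
    simp only [cellColumnRep, Fin.ext_iff, Fin.val_rev] at h
    omega
  · have hfix : (cellColumnRep k b).rev = cellColumnRep k b := by
      simp only [cellColumnRep, Fin.ext_iff, Fin.val_rev]
      omega
    rw [hfix, pair_eq_singleton, card_singleton]

theorem interC_eq_incidence (k : ℕ) :
    interC (2 * k + 1) (k + 2) =
      incidence ℤ fun b => {cellColumnRep k b, (cellColumnRep k b).rev} := by
  ext a b
  simp only [interC, incidence, cellColumnRep, of_apply, mem_insert, mem_singleton, Fin.ext_iff,
    Fin.val_rev]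
  split_ifs <;> omega

theorem one_add_heightRevD_apply (k : ℕ) (b b' : Fin (k + 2)) :
    (1 + heightRevD (k + 2)) b b' =
      if cellColumnRep k b = cellColumnRep k b' then if (b : ℕ) < k then 2 else 1 else 0 := by
  simp only [Matrix.add_apply, one_apply, heightRevD, cellColumnRep, Fin.ext_iff]
  split_ifs <;> omega

theorem cell_symmetry_operator_D_general (L : ℕ) (hodd : Odd L)
    (m : ℕ) (hm : m = (L + 3) / 2) :
    (interC L m)ᵀ * interC L m = 1 + heightRevD m := by
  obtain ⟨k, rfl⟩ := hodd
  obtain rfl : m = k + 2 := by omega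
  ext b b'
  rw [interC_eq_incidence, incidence_transpose_mul_self_apply, one_add_heightRevD_apply]
  by_cases hbb' : cellColumnRep k b = cellColumnRep k b'
  · rw [if_pos hbb', ← hbb', inter_self, card_pair_cellColumnRep_rev, Nat.cast_ite,
      Nat.cast_ofNat, Nat.cast_one]
  · rw [if_neg hbb', disjoint_iff_inter_eq_empty.mp (Fin.disjoint_pair_rev
      (cellColumnRep_le_rev k b) (cellColumnRep_le_rev k b') hbb'), card_empty, Nat.cast_zero]

/-- For odd `L ≥ 5` and `m = (L+3)/2`, the symmetry operator on the `D` side is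
`Cᵀ*C = 1 + R_D`, where `R_D` is the height-reversal permutation matrix of `D_m`. -/
theorem cell_symmetry_operator_D (L : ℕ) (hL : 5 ≤ L) (hodd : Odd L)
    (m : ℕ) (hm : m = (L + 3) / 2) :
    (interC L m)ᵀ * interC L m = 1 + heightRevD m :=
  cell_symmetry_operator_D_general L hodd m hm
end

section
/- Let L ≥ 5 be odd and m = (L+3)/2, and let A and D be the adjacency matrices of the graphs A_L and D_m, regarded as real symmetric matrices. Then A and D have the same largest eigenvalue: max of the eigenvalues of A equals max of the eigenvalues of D. -/
open Matrix

/-- Adjacency matrix of the graph `A_L` as a real matrix, with vertices `1,…,L`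
encoded as `Fin L`: `A_{a,a'} = 1` iff `|a − a'| = 1`. -/
def adjAR (L : ℕ) : Matrix (Fin L) (Fin L) ℝ := fun a a' =>
  if (a : ℕ) + 1 = (a' : ℕ) ∨ (a' : ℕ) + 1 = (a : ℕ) then 1 else 0

/-- Adjacency matrix of the graph `D_m` as a real matrix, with vertices `1,…,m`
encoded as `Fin m`.  In 1-based labels the edges are `{b,b+1}` for `1 ≤ b ≤ m−3`,
`{m−2,m−1}` and `{m−2,m}`; in the 0-based encoding, `b` and `b'` are adjacent iff
they are consecutive with `b + b' + 3 ≠ 2m`, or differ by 2 with `b + b' + 4 = 2m`. -/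
def adjDR (m : ℕ) : Matrix (Fin m) (Fin m) ℝ := fun b b' =>
  if ((b : ℕ) + 1 = (b' : ℕ) ∨ (b' : ℕ) + 1 = (b : ℕ)) ∧ (b : ℕ) + (b' : ℕ) + 3 ≠ 2 * m then 1
  else if ((b : ℕ) + 2 = (b' : ℕ) ∨ (b' : ℕ) + 2 = (b : ℕ)) ∧ (b : ℕ) + (b' : ℕ) + 4 = 2 * m then 1
  else 0

open Finset Real in
noncomputable def vget {n : ℕ} (v : Fin n → ℝ) (k : ℕ) : ℝ :=
  if h : k < n then v ⟨k, h⟩ else 0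

lemma sum_ind {n : ℕ} (v : Fin n → ℝ) (d k : ℕ) :
    (∑ j : Fin n, if (j : ℕ) + d = k then v j else 0)
      = if d ≤ k then vget v (k - d) else 0 := by
  by_cases hdk : d ≤ k
  · rw [if_pos hdk]
    unfold vget
    split
    · next h =>
      rw [Finset.sum_eq_single (⟨k - d, h⟩ : Fin n)]
      · rw [if_pos (by simp; omega)]
      · intro j _ hj
        rw [if_neg]
        intro hc
        have : (j:ℕ) = k - d := by omega
        exact hj (Fin.ext (by simpa using this))
      · simp
    · next h =>
      apply Finset.sum_eq_zero
      intro j _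
      rw [if_neg]
      intro hc
      omega
  · rw [if_neg hdk]
    apply Finset.sum_eq_zero
    intro j _
    rw [if_neg]; omega

lemma sum_const_ite {n : ℕ} (C : Prop) [Decidable C] (f : Fin n → ℝ) :
    (∑ j : Fin n, if C then f j else 0) = if C then ∑ j : Fin n, f j else 0 := by
  split <;> simp

lemma mulVecA (L : ℕ) (v : Fin L → ℝ) (a : Fin L) :
    (adjAR L).mulVec v a
      = vget v ((a : ℕ) + 1) + (if 1 ≤ (a : ℕ) then vget v ((a : ℕ) - 1) else 0) := by
  have hpt : ∀ j : Fin L, adjAR L a j * v j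
      = (if (j : ℕ) + 0 = (a : ℕ) + 1 then v j else 0)
        + (if (j : ℕ) + 1 = (a : ℕ) then v j else 0) := by
    intro j
    unfold adjAR
    split_ifs <;> first | ring1 | omega | (exfalso; omega)
  simp only [Matrix.mulVec, dotProduct, hpt, Finset.sum_add_distrib, sum_ind]
  simp

lemma mulVecD (m : ℕ) (w : Fin m → ℝ) (b : Fin m) :
    (adjDR m).mulVec w b
      = (if 2 * (b : ℕ) + 4 ≠ 2 * m then vget w ((b : ℕ) + 1) else 0)
        + (if 2 * (b : ℕ) + 2 ≠ 2 * m then (if 1 ≤ (b : ℕ) then vget w ((b : ℕ) - 1) else 0) else 0)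
        + (if 2 * (b : ℕ) + 6 = 2 * m then vget w ((b : ℕ) + 2) else 0)
        + (if 2 * (b : ℕ) + 2 = 2 * m then (if 2 ≤ (b : ℕ) then vget w ((b : ℕ) - 2) else 0) else 0) := by
  have hpt : ∀ j : Fin m, adjDR m b j * w j
      = (if 2 * (b : ℕ) + 4 ≠ 2 * m then (if (j : ℕ) + 0 = (b : ℕ) + 1 then w j else 0) else 0)
        + (if 2 * (b : ℕ) + 2 ≠ 2 * m then (if (j : ℕ) + 1 = (b : ℕ) then w j else 0) else 0)
        + (if 2 * (b : ℕ) + 6 = 2 * m then (if (j : ℕ) + 0 = (b : ℕ) + 2 then w j else 0) else 0)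
        + (if 2 * (b : ℕ) + 2 = 2 * m then (if (j : ℕ) + 2 = (b : ℕ) then w j else 0) else 0) := by
    intro j
    unfold adjDR
    split_ifs <;> first | ring1 | omega | (exfalso; omega)
  simp only [Matrix.mulVec, dotProduct, hpt, Finset.sum_add_distrib, sum_const_ite,
    sum_ind]
  simp

noncomputable def Usin (N k : ℕ) : ℝ := Real.sin (k * (Real.pi / N))

lemma U_rec (N k : ℕ) :
    Usin N k + Usin N (k + 2) = 2 * Real.cos (Real.pi / N) * Usin N (k + 1) := by
  unfold Usin
  push_cast
  rw [show ((k : ℝ) + 2) * (Real.pi / N) = ((k : ℝ) + 1) * (Real.pi / N) + Real.pi / N by ring,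
    show (k : ℝ) * (Real.pi / N) = ((k : ℝ) + 1) * (Real.pi / N) - Real.pi / N by ring,
    Real.sin_add, Real.sin_sub]
  ring

lemma U_pos {N k : ℕ} (hk : 0 < k) (hkN : k < N) : 0 < Usin N k := by
  have hN : 0 < N := lt_trans hk hkN
  have hNR : (0 : ℝ) < N := by exact_mod_cast hN
  have hθ : 0 < Real.pi / N := div_pos Real.pi_pos hNR
  apply Real.sin_pos_of_pos_of_lt_pi
  · positivity
  · have h1 : (k : ℝ) < N := by exact_mod_cast hkN
    calc (k : ℝ) * (Real.pi / N) < N * (Real.pi / N) := by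
          apply mul_lt_mul_of_pos_right h1 hθ
    _ = Real.pi := by field_simp

lemma U_zero (N : ℕ) : Usin N 0 = 0 := by simp [Usin]

lemma U_top {N : ℕ} (hN : 0 < N) : Usin N N = 0 := by
  unfold Usin
  have hNR : (N : ℝ) ≠ 0 := by positivity
  rw [show (N : ℝ) * (Real.pi / N) = Real.pi by field_simp]
  exact Real.sin_pi
lemma vget_apply {n : ℕ} (f : ℕ → ℝ) (k : ℕ) :
    vget (fun j : Fin n => f (j : ℕ)) k = if k < n then f k else 0 := by
  unfold vget
  split <;> simp_all

lemma eigA (L : ℕ) (hL : 1 ≤ L) :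
    ∃ u : Fin L → ℝ, (∀ i, 0 < u i) ∧
      (adjAR L).mulVec u = (2 * Real.cos (Real.pi / (L + 1))) • u := by
  refine ⟨fun a => Usin (L + 1) ((a : ℕ) + 1), fun i => U_pos (by omega) (by omega), ?_⟩
  funext a
  rw [show (fun a : Fin L => Usin (L + 1) ((a : ℕ) + 1))
      = (fun a : Fin L => (fun k => Usin (L + 1) (k + 1)) (a : ℕ)) from rfl]
  rw [mulVecA, vget_apply (n := L) (fun k => Usin (L + 1) (k + 1)), vget_apply (n := L) (fun k => Usin (L + 1) (k + 1))]
  have key := U_rec (L + 1) (a : ℕ)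
  push_cast at key
  have ha : (a : ℕ) < L := a.isLt
  have e2 : (a : ℕ) + 1 + 1 = (a : ℕ) + 2 := by omega
  simp only [Pi.smul_apply, smul_eq_mul]
  by_cases h1 : (a : ℕ) + 1 < L
  · rw [if_pos h1, e2]
    by_cases h2 : 1 ≤ (a : ℕ)
    · rw [if_pos h2, if_pos (by omega), show (a : ℕ) - 1 + 1 = (a : ℕ) by omega]
      linarith
    · rw [if_neg h2]
      have ha0 : (a : ℕ) = 0 := by omega
      rw [ha0] at key ⊢
      rw [U_zero] at key
      norm_num at key ⊢
      linarith
  · -- a = L - 1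
    rw [if_neg h1]
    have haL : (a : ℕ) + 1 = L := by omega
    have htop : Usin (L + 1) ((a : ℕ) + 2) = 0 := by
      rw [show (a : ℕ) + 2 = L + 1 by omega]
      exact U_top (by omega)
    rw [htop] at key
    by_cases h2 : 1 ≤ (a : ℕ)
    · rw [if_pos h2, if_pos (by omega), show (a : ℕ) - 1 + 1 = (a : ℕ) by omega]
      linarith
    · rw [if_neg h2]
      have ha0 : (a : ℕ) = 0 := by omega
      rw [ha0] at key ⊢
      rw [U_zero] at key
      linarith
noncomputable def gD (m N k : ℕ) : ℝ := if m ≤ k + 2 then 1/2 else Usin N (k + 1)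

lemma gD_low {m N k : ℕ} (h : ¬ m ≤ k + 2) : gD m N k = Usin N (k + 1) := if_neg h

lemma gD_high {m N k : ℕ} (h : m ≤ k + 2) : gD m N k = 1/2 := if_pos h

lemma eigD (m L : ℕ) (hm4 : 4 ≤ m) (hLm : L + 3 = 2 * m) :
    ∃ w : Fin m → ℝ, (∀ i, 0 < w i) ∧
      (adjDR m).mulVec w = (2 * Real.cos (Real.pi / (L + 1))) • w := by
  have hcast : (L : ℝ) + 3 = 2 * (m : ℝ) := by exact_mod_cast congrArg (Nat.cast : ℕ → ℝ) hLm
  have hL1 : ((L + 1 : ℕ) : ℝ) = 2 * (m : ℝ) - 2 := by push_cast; linarith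
  have hmR : (4 : ℝ) ≤ (m : ℝ) := by exact_mod_cast hm4
  have hne : ((L + 1 : ℕ) : ℝ) ≠ 0 := by rw [hL1]; linarith
  have hU1 : Usin (L + 1) (m - 1) = 1 := by
    unfold Usin
    rw [Nat.cast_sub (by omega : 1 ≤ m), Nat.cast_one, hL1,
      show ((m : ℝ) - 1) * (Real.pi / (2 * (m : ℝ) - 2)) = Real.pi / 2 by
        have h2 : 2 * (m : ℝ) - 2 ≠ 0 := by linarith
        have h3 : (m : ℝ) - 1 ≠ 0 := by linarith
        field_simp]
    exact Real.sin_pi_div_two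
  have hU2 : Usin (L + 1) (m - 2) = Real.cos (Real.pi / ((L + 1 : ℕ) : ℝ)) := by
    unfold Usin
    rw [Nat.cast_sub (by omega : 2 ≤ m), Nat.cast_ofNat, hL1,
      show ((m : ℝ) - 2) * (Real.pi / (2 * (m : ℝ) - 2))
          = Real.pi / 2 - Real.pi / (2 * (m : ℝ) - 2) by
        have h2 : 2 * (m : ℝ) - 2 ≠ 0 := by linarith
        have h3 : (m : ℝ) - 1 ≠ 0 := by linarith
        field_simp
        ring]
    exact Real.sin_pi_div_two_sub _
  refine ⟨fun b => gD m (L + 1) (b : ℕ), ?_, ?_⟩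
  · intro i
    show 0 < gD m (L + 1) (i : ℕ)
    by_cases h : m ≤ (i : ℕ) + 2
    · rw [gD_high h]; norm_num
    · rw [gD_low h]; exact U_pos (by omega) (by omega)
  · funext b
    have hb : (b : ℕ) < m := b.isLt
    rw [mulVecD, vget_apply (n := m) (gD m (L + 1)), vget_apply (n := m) (gD m (L + 1)),
      vget_apply (n := m) (gD m (L + 1)), vget_apply (n := m) (gD m (L + 1))]
    simp only [Pi.smul_apply, smul_eq_mul]
    by_cases hA : (b : ℕ) + 4 ≤ m
    · -- interior path vertices
      have key := U_rec (L + 1) (b : ℕ)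
      push_cast at key ⊢
      rw [if_pos (show 2 * (b : ℕ) + 4 ≠ 2 * m by omega),
        if_pos (show (b : ℕ) + 1 < m by omega),
        if_pos (show 2 * (b : ℕ) + 2 ≠ 2 * m by omega),
        if_neg (show ¬ 2 * (b : ℕ) + 6 = 2 * m by omega),
        if_neg (show ¬ 2 * (b : ℕ) + 2 = 2 * m by omega),
        gD_low (show ¬ m ≤ (b : ℕ) + 1 + 2 by omega),
        gD_low (show ¬ m ≤ (b : ℕ) + 2 by omega),
        show (b : ℕ) + 1 + 1 = (b : ℕ) + 2 by omega]
      by_cases hK0 : 1 ≤ (b : ℕ)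
      · rw [if_pos hK0, if_pos (show (b : ℕ) - 1 < m by omega),
          gD_low (show ¬ m ≤ (b : ℕ) - 1 + 2 by omega),
          show (b : ℕ) - 1 + 1 = (b : ℕ) by omega]
        linarith
      · rw [if_neg hK0]
        have hb0 : (b : ℕ) = 0 := by omega
        rw [hb0] at key ⊢
        rw [U_zero] at key
        norm_num at key ⊢
        linarith
    · by_cases hB : (b : ℕ) + 3 = m
      · -- the branch vertex
        have key := U_rec (L + 1) (b : ℕ)
        push_cast at key ⊢
        have h2 : Usin (L + 1) ((b : ℕ) + 2) = 1 := by
          rw [show (b : ℕ) + 2 = m - 1 by omega]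
          exact hU1
        rw [h2] at key
        rw [if_pos (show 2 * (b : ℕ) + 4 ≠ 2 * m by omega),
          if_pos (show (b : ℕ) + 1 < m by omega),
          if_pos (show 2 * (b : ℕ) + 2 ≠ 2 * m by omega),
          if_pos (show 1 ≤ (b : ℕ) by omega),
          if_pos (show (b : ℕ) - 1 < m by omega),
          if_pos (show 2 * (b : ℕ) + 6 = 2 * m by omega),
          if_pos (show (b : ℕ) + 2 < m by omega),
          if_neg (show ¬ 2 * (b : ℕ) + 2 = 2 * m by omega),
          gD_high (show m ≤ (b : ℕ) + 1 + 2 by omega),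
          gD_high (show m ≤ (b : ℕ) + 2 + 2 by omega),
          gD_low (show ¬ m ≤ (b : ℕ) - 1 + 2 by omega),
          gD_low (show ¬ m ≤ (b : ℕ) + 2 by omega),
          show (b : ℕ) - 1 + 1 = (b : ℕ) by omega]
        linarith
      · by_cases hC : (b : ℕ) + 2 = m
        · -- first leaf
          rw [if_neg (show ¬ 2 * (b : ℕ) + 4 ≠ 2 * m by omega),
            if_pos (show 2 * (b : ℕ) + 2 ≠ 2 * m by omega),
            if_pos (show 1 ≤ (b : ℕ) by omega),
            if_pos (show (b : ℕ) - 1 < m by omega),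
            if_neg (show ¬ 2 * (b : ℕ) + 6 = 2 * m by omega),
            if_neg (show ¬ 2 * (b : ℕ) + 2 = 2 * m by omega),
            gD_low (show ¬ m ≤ (b : ℕ) - 1 + 2 by omega),
            gD_high (show m ≤ (b : ℕ) + 2 by omega),
            show (b : ℕ) - 1 + 1 = m - 2 by omega, hU2]
          push_cast
          ring
        · -- second leaf : (b : ℕ) + 1 = m
          have hD : (b : ℕ) + 1 = m := by omega
          rw [if_pos (show 2 * (b : ℕ) + 4 ≠ 2 * m by omega),
            if_neg (show ¬ (b : ℕ) + 1 < m by omega),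
            if_neg (show ¬ 2 * (b : ℕ) + 2 ≠ 2 * m by omega),
            if_neg (show ¬ 2 * (b : ℕ) + 6 = 2 * m by omega),
            if_pos (show 2 * (b : ℕ) + 2 = 2 * m by omega),
            if_pos (show 2 ≤ (b : ℕ) by omega),
            if_pos (show (b : ℕ) - 2 < m by omega),
            gD_low (show ¬ m ≤ (b : ℕ) - 2 + 2 by omega),
            gD_high (show m ≤ (b : ℕ) + 2 by omega),
            show (b : ℕ) - 2 + 1 = m - 2 by omega, hU2]
          push_cast
          ring
lemma eig_le {n : ℕ} (M : Matrix (Fin n) (Fin n) ℝ) (hM : ∀ i j, 0 ≤ M i j)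
    (u : Fin n → ℝ) (hu : ∀ i, 0 < u i) (μ : ℝ) (hMu : M.mulVec u = μ • u)
    (lam : ℝ) (v : Fin n → ℝ) (hv : v ≠ 0) (hMv : M.mulVec v = lam • v) : lam ≤ μ := by
  obtain ⟨k, hk⟩ : ∃ k, v k ≠ 0 := by
    by_contra h
    push_neg at h
    exact hv (funext h)
  have hne : (Finset.univ : Finset (Fin n)).Nonempty := ⟨k, Finset.mem_univ k⟩
  obtain ⟨i, -, hi⟩ := Finset.exists_max_image Finset.univ (fun j => |v j| / u j) hne
  have hratio : ∀ j, |v j| ≤ |v i| / u i * u j := by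
    intro j
    have h1 : |v j| / u j ≤ |v i| / u i := hi j (Finset.mem_univ j)
    calc |v j| = |v j| / u j * u j := by
          rw [div_mul_cancel₀ _ (ne_of_gt (hu j))]
    _ ≤ |v i| / u i * u j := mul_le_mul_of_nonneg_right h1 (hu j).le
  have hvi : 0 < |v i| := by
    have h1 : |v k| / u k ≤ |v i| / u i := hi k (Finset.mem_univ k)
    have h2 : 0 < |v k| / u k := div_pos (abs_pos.mpr hk) (hu k)
    have h3 : 0 < |v i| / u i := lt_of_lt_of_le h2 h1
    by_contra h
    push_neg at h
    have : |v i| = 0 := le_antisymm h (abs_nonneg _)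
    rw [this] at h3
    simp at h3
  have hMui : ∑ j, M i j * u j = μ * u i := by
    have := congrFun hMu i
    simpa [Matrix.mulVec, dotProduct] using this
  have hMvi : lam * v i = ∑ j, M i j * v j := by
    have := congrFun hMv i
    simp [Matrix.mulVec, dotProduct] at this
    linarith
  have key : |lam| * |v i| ≤ μ * |v i| := by
    calc |lam| * |v i| = |lam * v i| := (abs_mul _ _).symm
    _ = |∑ j, M i j * v j| := by rw [hMvi]
    _ ≤ ∑ j, |M i j * v j| := Finset.abs_sum_le_sum_abs _ _
    _ ≤ ∑ j, M i j * (|v i| / u i * u j) := by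
        apply Finset.sum_le_sum
        intro j _
        rw [abs_mul, abs_of_nonneg (hM i j)]
        exact mul_le_mul_of_nonneg_left (hratio j) (hM i j)
    _ = |v i| / u i * ∑ j, M i j * u j := by
        rw [Finset.mul_sum]
        exact Finset.sum_congr rfl fun j _ => by ring
    _ = |v i| / u i * (μ * u i) := by rw [hMui]
    _ = μ * (|v i| / u i * u i) := by ring
    _ = μ * |v i| := by rw [div_mul_cancel₀ _ (ne_of_gt (hu i))]
  exact le_trans (le_abs_self lam) (le_of_mul_le_mul_right key hvi)

lemma adjAR_nonneg (L : ℕ) (i j : Fin L) : 0 ≤ adjAR L i j := by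
  unfold adjAR
  split <;> norm_num

lemma adjDR_nonneg (m : ℕ) (i j : Fin m) : 0 ≤ adjDR m i j := by
  unfold adjDR
  split_ifs <;> norm_num

/-- For odd `L ≥ 5` and `m = (L+3)/2`, the (real symmetric) adjacency matrices of
`A_L` and `D_m` have the same largest eigenvalue. -/
theorem same_largest_eigenvalue (L : ℕ) (hL : 5 ≤ L) (hodd : Odd L)
    (m : ℕ) (hm : m = (L + 3) / 2) :
    sSup {lam : ℝ | ∃ v : Fin L → ℝ, v ≠ 0 ∧ (adjAR L).mulVec v = lam • v} =
      sSup {lam : ℝ | ∃ w : Fin m → ℝ, w ≠ 0 ∧ (adjDR m).mulVec w = lam • w} := by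
  obtain ⟨t, ht⟩ := hodd
  have hm4 : 4 ≤ m := by omega
  have hLm : L + 3 = 2 * m := by omega
  set μ : ℝ := 2 * Real.cos (Real.pi / (L + 1)) with hμ
  obtain ⟨u, hupos, huE⟩ := eigA L (by omega)
  obtain ⟨w, hwpos, hwE⟩ := eigD m L hm4 hLm
  have hune : u ≠ 0 := by
    intro h
    have := congrFun h ⟨0, by omega⟩
    exact (ne_of_gt (hupos ⟨0, by omega⟩)) (by simpa using this)
  have hwne : w ≠ 0 := by
    intro h
    have := congrFun h ⟨0, by omega⟩
    exact (ne_of_gt (hwpos ⟨0, by omega⟩)) (by simpa using this)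
  have hmemA : μ ∈ {lam : ℝ | ∃ v : Fin L → ℝ, v ≠ 0 ∧ (adjAR L).mulVec v = lam • v} :=
    ⟨u, hune, huE⟩
  have hmemD : μ ∈ {lam : ℝ | ∃ w' : Fin m → ℝ, w' ≠ 0 ∧ (adjDR m).mulVec w' = lam • w'} :=
    ⟨w, hwne, hwE⟩
  have hbdA : ∀ lam ∈ {lam : ℝ | ∃ v : Fin L → ℝ, v ≠ 0 ∧ (adjAR L).mulVec v = lam • v},
      lam ≤ μ := by
    rintro lam ⟨v, hv, hvE⟩
    exact eig_le _ (adjAR_nonneg L) u hupos μ huE lam v hv hvE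
  have hbdD : ∀ lam ∈ {lam : ℝ | ∃ w' : Fin m → ℝ, w' ≠ 0 ∧ (adjDR m).mulVec w' = lam • w'},
      lam ≤ μ := by
    rintro lam ⟨v, hv, hvE⟩
    exact eig_le _ (adjDR_nonneg m) w hwpos μ hwE lam v hv hvE
  have hA : sSup {lam : ℝ | ∃ v : Fin L → ℝ, v ≠ 0 ∧ (adjAR L).mulVec v = lam • v} = μ :=
    le_antisymm (csSup_le ⟨μ, hmemA⟩ hbdA)
      (le_csSup ⟨μ, fun x hx => hbdA x hx⟩ hmemA)
  have hD : sSup {lam : ℝ | ∃ w' : Fin m → ℝ, w' ≠ 0 ∧ (adjDR m).mulVec w' = lam • w'} = μ :=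
    le_antisymm (csSup_le ⟨μ, hmemD⟩ hbdD)
      (le_csSup ⟨μ, fun x hx => hbdD x hx⟩ hmemD)
  rw [hA, hD]
end
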